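/- (Fixed-design linear regression / OLS.) Let W_1, …, W_n ∈ ℝ^p be fixed covariates with design matrix 𝑾 ∈ ℝ^{n×p} (rows W_i^⊤) such that 𝑾^⊤𝑾 is invertible, and let X_i = W_i^⊤θ + ε_i for 1 ≤ i ≤ n, where θ ∈ ℝ^p and ε_1, …, ε_n are i.i.d. from a mean-zero distribution P_0 on ℝ with Lebesgue density and finite variance. Then the ordinary least squares estimator T_n^{OLS}(x) := (𝑾^⊤𝑾)^{-1}𝑾^⊤x satisfies: (a) E_θ[T_n^{OLS}(X_1,…,X_n)] = θ for all θ (unbiasedness), and (b) ∑_{i=1}^n (∇_{x_i}T_n^{OLS})(∇_{x_i}T_n^{OLS})^⊤ = (𝑾^⊤𝑾)^{-1} identically, so its cosensitivity matrix equals (𝑾^⊤𝑾)^{-1}, which is the Wasserstein–Cramér–Rao lower bound for this model; hence T_n^{OLS} is sensitivity-efficient. -/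
import Mathlib


open MeasureTheory Filter
open scoped Topology ENNReal Matrix

noncomputable section

lemma pi_map_eval' {ι : Type*} [Fintype ι] [DecidableEq ι] (μ : ι → Measure ℝ)
    [∀ i, IsProbabilityMeasure (μ i)] (i : ι) :
    (Measure.pi μ).map (fun ε : ι → ℝ => ε i) = μ i := by
  ext s hs
  rw [Measure.map_apply (measurable_pi_apply i) hs]
  have : (fun ε : ι → ℝ => ε i) ⁻¹' s
      = Set.pi Set.univ (Function.update (fun _ => (Set.univ : Set ℝ)) i s) := by
    ext f
    simp only [Set.mem_preimage, Set.mem_pi, Set.mem_univ, forall_true_left]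
    constructor
    · intro hf j
      rcases eq_or_ne j i with rfl | hj
      · simpa using hf
      · simp [Function.update_of_ne hj]
    · intro hf
      have := hf i
      simpa using this
  rw [this, Measure.pi_pi]
  have : ∀ j, μ j (Function.update (fun _ => Set.univ) i s j) =
      if j = i then μ i s else 1 := by
    intro j
    rcases eq_or_ne j i with rfl | hj
    · simp
    · simp [Function.update_of_ne hj, hj]
  simp_rw [this]
  simp

lemma eval_integrable {ι : Type*} [Fintype ι] [DecidableEq ι] (μ : Measure ℝ)
    [IsProbabilityMeasure μ] (hint : Integrable (fun x : ℝ => x) μ) (i : ι) :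
    Integrable (fun ε : ι → ℝ => ε i) (Measure.pi fun _ : ι => μ) := by
  have h := pi_map_eval' (fun _ : ι => μ) i
  have h2 : Integrable (fun x : ℝ => x)
      ((Measure.pi fun _ : ι => μ).map (fun ε : ι → ℝ => ε i)) := by
    rw [h]; exact hint
  exact (integrable_map_measure h2.aestronglyMeasurable
    (measurable_pi_apply i).aemeasurable).mp h2

lemma eval_integral_zero {ι : Type*} [Fintype ι] [DecidableEq ι] (μ : Measure ℝ)
    [IsProbabilityMeasure μ] (hmean : (∫ x, x ∂μ) = 0) (i : ι) :
    (∫ ε : ι → ℝ, ε i ∂(Measure.pi fun _ : ι => μ)) = 0 := by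
  have h := pi_map_eval' (fun _ : ι => μ) i
  have hm : AEStronglyMeasurable (fun x : ℝ => x)
      ((Measure.pi fun _ : ι => μ).map (fun ε : ι → ℝ => ε i)) := by
    rw [h]; exact measurable_id.aestronglyMeasurable
  have := integral_map (φ := fun ε : ι → ℝ => ε i) (measurable_pi_apply i).aemeasurable hm
  rw [h] at this
  rw [← this, hmean]

/-- Example 5.9 (fixed-design linear regression / OLS). Let `W ∈ ℝ^{n×p}` be a fixed design
matrix with `WᵀW` invertible, and let `Xᵢ = Wᵢᵀθ + εᵢ` with `ε₁,…,ε_n` i.i.d. from a mean-zero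
distribution `P₀` on `ℝ` with Lebesgue density and finite variance. Then the OLS estimator
`T^{OLS}(x) = (WᵀW)⁻¹Wᵀx` satisfies:
(a) unbiasedness: `E_θ[T^{OLS}(X₁,…,X_n)] = θ` for all `θ`;
(b) `∑ᵢ (∇_{xᵢ}T^{OLS})(∇_{xᵢ}T^{OLS})ᵀ = (WᵀW)⁻¹` identically; and hence
(c) its cosensitivity matrix equals `(WᵀW)⁻¹`, the Wasserstein–Cramér–Rao lower bound for this
model, so `T^{OLS}` is sensitivity-efficient. -/
theorem ols_unbiased_sensitivity_efficient {n p : ℕ}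
    (W : Matrix (Fin n) (Fin p) ℝ) (hW : IsUnit (Wᵀ * W))
    (P₀ : Measure ℝ) (hP₀ : IsProbabilityMeasure P₀) (hac : P₀ ≪ volume)
    (hint : Integrable (fun x : ℝ => x) P₀) (hmean : (∫ x, x ∂P₀) = 0)
    (hvar : Integrable (fun x : ℝ => x ^ 2) P₀) :
    -- (a) unbiasedness
    (∀ θ : Fin p → ℝ,
      (∫ ε : Fin n → ℝ, ((Wᵀ * W)⁻¹ * Wᵀ).mulVec (W.mulVec θ + ε)
        ∂(Measure.pi fun _ : Fin n => P₀)) = θ) ∧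
    -- (b) the (deterministic) sum of outer products of the partial derivatives
    (∀ x : Fin n → ℝ,
      (Matrix.of fun j j' : Fin p => ∑ i : Fin n,
        fderiv ℝ (fun y : Fin n → ℝ => ((Wᵀ * W)⁻¹ * Wᵀ).mulVec y) x (Pi.single i 1) j *
        fderiv ℝ (fun y : Fin n → ℝ => ((Wᵀ * W)⁻¹ * Wᵀ).mulVec y) x (Pi.single i 1) j')
        = (Wᵀ * W)⁻¹) ∧
    -- (c) the cosensitivity matrix equals `(WᵀW)⁻¹`
    (∀ θ : Fin p → ℝ,
      (Matrix.of fun j j' : Fin p =>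
        ∫ ε : Fin n → ℝ, ∑ i : Fin n,
          fderiv ℝ (fun y : Fin n → ℝ => ((Wᵀ * W)⁻¹ * Wᵀ).mulVec y)
            (W.mulVec θ + ε) (Pi.single i 1) j *
          fderiv ℝ (fun y : Fin n → ℝ => ((Wᵀ * W)⁻¹ * Wᵀ).mulVec y)
            (W.mulVec θ + ε) (Pi.single i 1) j'
          ∂(Measure.pi fun _ : Fin n => P₀))
        = (Wᵀ * W)⁻¹) := by
  set A : Matrix (Fin p) (Fin n) ℝ := (Wᵀ * W)⁻¹ * Wᵀ with hA_def
  have hdet : IsUnit (Wᵀ * W).det := (Matrix.isUnit_iff_isUnit_det _).mp hW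
  have hAW : A * W = 1 := by
    rw [hA_def, Matrix.mul_assoc, Matrix.nonsing_inv_mul _ hdet]
  have hAAT : A * Aᵀ = (Wᵀ * W)⁻¹ := by
    have h1 : Aᵀ = W * (Wᵀ * W)⁻¹ := by
      rw [hA_def, Matrix.transpose_mul, Matrix.transpose_transpose,
        Matrix.transpose_nonsing_inv, Matrix.transpose_mul, Matrix.transpose_transpose]
    rw [h1, ← Matrix.mul_assoc, hAW, Matrix.one_mul]
  set L : (Fin n → ℝ) →L[ℝ] (Fin p → ℝ) :=
    LinearMap.toContinuousLinearMap (Matrix.mulVecLin A) with hL_def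
  have hfun : (fun y : Fin n → ℝ => A.mulVec y) = L := rfl
  have hder : ∀ (x v : Fin n → ℝ),
      fderiv ℝ (fun y : Fin n → ℝ => A.mulVec y) x v = A.mulVec v := by
    intro x v
    rw [hfun, ContinuousLinearMap.fderiv]
    rfl
  have hderj : ∀ (x : Fin n → ℝ) (i : Fin n) (j : Fin p),
      fderiv ℝ (fun y : Fin n → ℝ => A.mulVec y) x (Pi.single i 1) j = A j i := by
    intro x i j
    rw [hder]
    simp [Matrix.mulVec_single]
  have π := Measure.pi fun _ : Fin n => P₀
  have hB : ∀ x : Fin n → ℝ,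
      (Matrix.of fun j j' : Fin p => ∑ i : Fin n,
        fderiv ℝ (fun y : Fin n → ℝ => A.mulVec y) x (Pi.single i 1) j *
        fderiv ℝ (fun y : Fin n → ℝ => A.mulVec y) x (Pi.single i 1) j')
        = (Wᵀ * W)⁻¹ := by
    intro x
    ext j j'
    simp only [Matrix.of_apply]
    rw [← hAAT, Matrix.mul_apply]
    refine Finset.sum_congr rfl fun i _ => ?_
    rw [hderj, hderj, Matrix.transpose_apply]
  refine ⟨?_, hB, ?_⟩
  · -- (a) unbiasedness
    intro θ
    have hid : Integrable (fun ε : Fin n → ℝ => ε)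
        (Measure.pi fun _ : Fin n => P₀) := by
      have : (fun ε : Fin n → ℝ => ε)
          = fun ε : Fin n → ℝ => ∑ i : Fin n, ε i • (Pi.single i (1 : ℝ) : Fin n → ℝ) := by
        funext ε
        ext i
        simp [Pi.single_apply, Finset.sum_apply]
      rw [this]
      exact integrable_finset_sum _ fun i _ =>
        (eval_integrable P₀ hint i).smul_const ((Pi.single i (1 : ℝ) : Fin n → ℝ))
    have hid0 : (∫ ε : Fin n → ℝ, ε ∂(Measure.pi fun _ : Fin n => P₀)) = 0 := by
      have h1 : (fun ε : Fin n → ℝ => ε)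
          = fun ε : Fin n → ℝ => ∑ i : Fin n, ε i • (Pi.single i (1 : ℝ) : Fin n → ℝ) := by
        funext ε
        ext i
        simp [Pi.single_apply, Finset.sum_apply]
      rw [h1, integral_finset_sum _ fun i _ =>
        (eval_integrable P₀ hint i).smul_const ((Pi.single i (1 : ℝ) : Fin n → ℝ))]
      have : ∀ i : Fin n,
          (∫ ε : Fin n → ℝ, ε i • (Pi.single i (1 : ℝ) : Fin n → ℝ)
            ∂(Measure.pi fun _ : Fin n => P₀)) = 0 := by
        intro i
        rw [integral_smul_const, eval_integral_zero P₀ hmean i, zero_smul]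
      simp [this]
    have hsplit : (fun ε : Fin n → ℝ => A.mulVec (W.mulVec θ + ε))
        = fun ε : Fin n → ℝ => θ + L ε := by
      funext ε
      rw [Matrix.mulVec_add]
      congr 1
      rw [Matrix.mulVec_mulVec, hAW, Matrix.one_mulVec]
    rw [hsplit]
    have hLint : Integrable (fun ε : Fin n → ℝ => L ε)
        (Measure.pi fun _ : Fin n => P₀) := L.integrable_comp hid
    rw [integral_add (integrable_const θ) hLint, integral_const]
    have : (∫ ε : Fin n → ℝ, L ε ∂(Measure.pi fun _ : Fin n => P₀)) = L 0 := by
      rw [L.integral_comp_comm hid, hid0]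
    rw [this, map_zero, add_zero]
    simp
  · -- (c)
    intro θ
    ext j j'
    simp only [Matrix.of_apply]
    have hconst : ∀ ε : Fin n → ℝ,
        (∑ i : Fin n,
          fderiv ℝ (fun y : Fin n → ℝ => A.mulVec y) (W.mulVec θ + ε) (Pi.single i 1) j *
          fderiv ℝ (fun y : Fin n → ℝ => A.mulVec y) (W.mulVec θ + ε) (Pi.single i 1) j')
        = (Wᵀ * W)⁻¹ j j' := by
      intro ε
      have := congrArg (fun M => M j j') (hB (W.mulVec θ + ε))
      simpa using this
    simp_rw [hconst]
    rw [integral_const]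
    simp
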